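/- Let h > 0, δ ∈ [0,1), s > 0, and let u, v ∈ ℝ^p satisfy ‖u − v‖_max ≤ h/2 and Σⱼ |vⱼ|^δ ≤ s (0^0 := 0). Let s(·): ℝ → ℝ satisfy |s(x) − x| ≤ h for all x, and define ũⱼ := s(uⱼ)·1{|uⱼ| ≥ h}. Then ‖ũ − v‖₁ ≤ C s h^{1−δ}, where C is a constant depending only on δ (one may take C = (3/2)·2^δ + (3/2)^{1−δ}). -/

import Mathlib

/-!
Coordinatewise, with `w = |v j| ^ δ`. If `u j` survives the threshold, then `|v j| ≥ h/2`,
so the error `|s (u j) - v j| ≤ 3h/2 = 3 (h/2)` is paid for by `(h/2) ≤ (h/2)^{1-δ} w`.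
If `u j` is killed, the error is `|v j| ≤ 3h/2`, and `|v j| = |v j|^{1-δ} w ≤ (3h/2)^{1-δ} w`.
Summing over `j` and using `∑ w ≤ sp` gives the bound.
-/

/-- The ℓ¹ norm on ℝ^p. -/
noncomputable def l1 {p : ℕ} (x : Fin p → ℝ) : ℝ := ∑ i, |x i|

/-- `wpow x δ` is `x ^ δ` (real power) with the convention `0 ^ 0 = 0`. -/
noncomputable def wpow (x δ : ℝ) : ℝ := if x = 0 then 0 else x ^ δ

open Real

lemma wpow_nonneg {x : ℝ} (hx : 0 ≤ x) (δ : ℝ) : 0 ≤ wpow x δ := by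
  unfold wpow
  split_ifs
  exacts [le_rfl, rpow_nonneg hx δ]

lemma wpow_of_ne_zero {x : ℝ} (hx : x ≠ 0) (δ : ℝ) : wpow x δ = x ^ δ := if_neg hx

lemma le_rpow_mul_wpow_of_le {m y δ : ℝ} (hm : 0 < m) (hmy : m ≤ y) (hδ : 0 ≤ δ) :
    m ≤ m ^ (1 - δ) * wpow y δ := by
  rw [wpow_of_ne_zero (hm.trans_le hmy).ne']
  calc m = m ^ (1 - δ) * m ^ δ := by rw [← rpow_add hm]; norm_num
    _ ≤ m ^ (1 - δ) * y ^ δ := by gcongr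

lemma self_le_rpow_mul_wpow_of_le {y M δ : ℝ} (hy : 0 ≤ y) (hyM : y ≤ M) (hδ : δ ≤ 1) :
    y ≤ M ^ (1 - δ) * wpow y δ := by
  rcases hy.eq_or_lt with rfl | hy
  · simp [wpow]
  rw [wpow_of_ne_zero hy.ne']
  calc y = y ^ (1 - δ) * y ^ δ := by rw [← rpow_add hy]; norm_num
    _ ≤ M ^ (1 - δ) * y ^ δ := by gcongr

lemma three_mul_half_rpow_one_sub {h : ℝ} (hh : 0 ≤ h) (δ : ℝ) :
    3 * (h / 2) ^ (1 - δ) = (3 / 2) * 2 ^ δ * h ^ (1 - δ) := by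
  rw [div_rpow hh zero_le_two, rpow_sub two_pos, rpow_one]
  field_simp

lemma abs_threshold_sub_le {h δ x y : ℝ} {s : ℝ → ℝ} (hh : 0 < h) (hδ0 : 0 ≤ δ) (hδ1 : δ < 1)
    (hxy : |x - y| ≤ h / 2) (hs : |s x - x| ≤ h) :
    |s x * (if h ≤ |x| then (1 : ℝ) else 0) - y| ≤
      ((3 / 2) * 2 ^ δ + (3 / 2) ^ (1 - δ)) * h ^ (1 - δ) * wpow |y| δ := by
  have hw : 0 ≤ wpow |y| δ := wpow_nonneg (abs_nonneg y) δ
  have hhδ : 0 ≤ h ^ (1 - δ) := rpow_nonneg hh.le _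
  have hxy' := abs_sub_abs_le_abs_sub x y
  have hyx' := abs_sub_abs_le_abs_sub y x
  rw [abs_sub_comm] at hyx'
  split_ifs with hx
  · have hkept : 3 * (h / 2) ≤ (3 / 2) * 2 ^ δ * h ^ (1 - δ) * wpow |y| δ := by
      rw [← three_mul_half_rpow_one_sub hh.le, mul_assoc]
      gcongr
      exact le_rpow_mul_wpow_of_le (by positivity) (by linarith) hδ0
    have herr : |s x - y| ≤ 3 * (h / 2) := by
      calc |s x - y| = |(s x - x) + (x - y)| := by ring_nf
        _ ≤ |s x - x| + |x - y| := abs_add_le _ _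
        _ ≤ 3 * (h / 2) := by linarith
    have : 0 ≤ (3 / 2) ^ (1 - δ) * h ^ (1 - δ) * wpow |y| δ := by positivity
    rw [mul_one]
    linarith
  · have hkilled : |y| ≤ (3 / 2) ^ (1 - δ) * h ^ (1 - δ) * wpow |y| δ := by
      rw [← mul_rpow (by norm_num) hh.le]
      exact self_le_rpow_mul_wpow_of_le (abs_nonneg y) (by linarith) hδ1.le
    have : 0 ≤ (3 / 2) * 2 ^ δ * h ^ (1 - δ) * wpow |y| δ := by positivity
    rw [mul_zero, zero_sub, abs_neg]
    linarith

theorem stmt11_general {p : ℕ} (h δ sp : ℝ) (u v : Fin p → ℝ) (s : ℝ → ℝ)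
    (hh : 0 < h) (hδ0 : 0 ≤ δ) (hδ1 : δ < 1)
    (hmax : ∀ j, |u j - v j| ≤ h / 2)
    (hv : ∑ j, wpow |v j| δ ≤ sp)
    (hs : ∀ x, |s x - x| ≤ h) :
    l1 ((fun j => s (u j) * (if h ≤ |u j| then (1:ℝ) else 0)) - v) ≤
      ((3 / 2) * 2 ^ δ + (3 / 2) ^ (1 - δ)) * sp * h ^ (1 - δ) := by
  set C := ((3 / 2) * 2 ^ δ + (3 / 2) ^ (1 - δ)) * h ^ (1 - δ)
  have hC : 0 ≤ C := by positivity
  calc l1 ((fun j => s (u j) * (if h ≤ |u j| then (1:ℝ) else 0)) - v)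
      ≤ ∑ j, C * wpow |v j| δ :=
        Finset.sum_le_sum fun j _ => abs_threshold_sub_le hh hδ0 hδ1 (hmax j) (hs (u j))
    _ = C * ∑ j, wpow |v j| δ := by rw [Finset.mul_sum]
    _ ≤ C * sp := by gcongr
    _ = ((3 / 2) * 2 ^ δ + (3 / 2) ^ (1 - δ)) * sp * h ^ (1 - δ) := by ring

/-- Deterministic content of Theorem 4 (TED): thresholding an element-wise
accurate estimator of a weakly sparse target yields an ℓ¹ bound `C s h^{1-δ}`
with `C = (3/2)·2^δ + (3/2)^{1-δ}`. -/
theorem stmt11 {p : ℕ} (h δ sp : ℝ) (u v : Fin p → ℝ) (s : ℝ → ℝ)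
    (hh : 0 < h) (hδ0 : 0 ≤ δ) (hδ1 : δ < 1) (hsp0 : 0 < sp)
    (hmax : ∀ j, |u j - v j| ≤ h / 2)
    (hv : ∑ j, wpow |v j| δ ≤ sp)
    (hs : ∀ x, |s x - x| ≤ h) :
    l1 ((fun j => s (u j) * (if h ≤ |u j| then (1:ℝ) else 0)) - v) ≤
      ((3 / 2) * 2 ^ δ + (3 / 2) ^ (1 - δ)) * sp * h ^ (1 - δ) :=
  stmt11_general h δ sp u v s hh hδ0 hδ1 hmax hv hs
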